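/- arXiv:2410.01217 — 2 statements merged into one kernel-verified Lean document; each statement's English description precedes it below -/
import Mathlib

section
/- For any nonnegative integers a, b with a + b ≥ 2, the word 0^a 101 0^b is Ulam if and only if a + b is odd (equivalently, the length of the word is even). -/
/-- Ulam words with fuel bounding the recursion depth (fuel ≥ length suffices). -/
def UlamN : ℕ → List Bool → Prop
  | 0, _ => False
  | n + 1, w =>
    w = [false] ∨ w = [true] ∨
      ∃! p : List Bool × List Bool,
        p.1 ≠ [] ∧ p.2 ≠ [] ∧ UlamN n p.1 ∧ UlamN n p.2 ∧ p.1 ≠ p.2 ∧ p.1 ++ p.2 = w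

/-- A word over {0,1} (`false` = 0, `true` = 1) is Ulam. -/
def IsUlam (w : List Bool) : Prop := UlamN w.length w

/-- The integer whose binary representation (most significant digit first) is `w`. -/
def binVal (w : List Bool) : ℕ := w.foldl (fun acc b => 2 * acc + b.toNat) 0

/-!
An Ulam split `u ++ v` of `0^a 101 0^b` either has a factor consisting of zeros only, which must
then be `0` since `0^k` is Ulam only for `k = 1`, or cuts `101`. So the only candidates are
`0 | 0^(a-1) 101 0^b`, `0^a 1 | 01 0^b`, `0^a 10 | 1 0^b` and `0^a 101 0^(b-1) | 0`.
The words `0^a 1` and `1 0^b` are always Ulam, while `0^a 10` and `01 0^b` are Ulam exactly when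
`a`, resp. `b`, is even (Ulamness is invariant under reversal). By induction on `a + b`: for odd
`a + b ≥ 3` exactly one of `a, b` is even and only one middle cut is a valid split; for even
`a + b` either both middle cuts or both end cuts are valid, or (when `a = b = 1`) none is.
-/
open List

lemma not_ulamN_nil : ∀ n, ¬UlamN n []
  | 0 => id
  | _ + 1 => by
    rintro (h | h | ⟨p, ⟨h1, -, -, -, -, h6⟩, -⟩)
    · cases h
    · cases h
    · exact h1 (append_eq_nil_iff.mp h6).1

lemma length_lt_of_append_eq_left {α : Type*} {u v w : List α} (hv : v ≠ []) (h : u ++ v = w) :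
    u.length < w.length := by
  subst h; simpa [Nat.pos_iff_ne_zero] using hv

lemma length_lt_of_append_eq_right {α : Type*} {u v w : List α} (hu : u ≠ []) (h : u ++ v = w) :
    v.length < w.length := by
  subst h; simpa [Nat.pos_iff_ne_zero] using hu

lemma ulamN_congr_fuel {n m : ℕ} {w : List Bool} (hn : w.length ≤ n) (hm : w.length ≤ m) :
    UlamN n w ↔ UlamN m w := by
  induction n generalizing m w with
  | zero =>
    rw [length_eq_zero_iff.mp (Nat.le_zero.mp hn)]
    exact iff_of_false id (not_ulamN_nil m)
  | succ n ih =>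
    obtain _ | m := m
    · rw [length_eq_zero_iff.mp (Nat.le_zero.mp hm)]
      exact iff_of_false (not_ulamN_nil _) id
    have key : ∀ u : List Bool, u.length < w.length → (UlamN n u ↔ UlamN m u) :=
      fun u hu => ih (by omega) (by omega)
    simp only [UlamN]
    refine or_congr_right (or_congr_right (existsUnique_congr fun p => ?_))
    constructor <;> rintro ⟨h1, h2, h3, h4, h5, h6⟩
    · exact ⟨h1, h2, (key _ (length_lt_of_append_eq_left h2 h6)).1 h3,
        (key _ (length_lt_of_append_eq_right h1 h6)).1 h4, h5, h6⟩
    · exact ⟨h1, h2, (key _ (length_lt_of_append_eq_left h2 h6)).2 h3,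
        (key _ (length_lt_of_append_eq_right h1 h6)).2 h4, h5, h6⟩

lemma ulamN_reverse_iff {n : ℕ} {w : List Bool} : UlamN n w.reverse ↔ UlamN n w := by
  induction n generalizing w with
  | zero => rfl
  | succ n ih =>
    have hsplit : ∀ u v : List Bool,
        (u ≠ [] ∧ v ≠ [] ∧ UlamN n u ∧ UlamN n v ∧ u ≠ v ∧ u ++ v = w.reverse) ↔
        (v.reverse ≠ [] ∧ u.reverse ≠ [] ∧ UlamN n v.reverse ∧ UlamN n u.reverse ∧
          v.reverse ≠ u.reverse ∧ v.reverse ++ u.reverse = w) := by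
      intro u v
      rw [← reverse_append, reverse_eq_iff]
      simp only [ne_eq, reverse_eq_nil_iff, ih, reverse_inj]
      tauto
    simp only [UlamN]
    refine or_congr (by simp) (or_congr (by simp) ?_)
    let swapReverse : Equiv.Perm (List Bool × List Bool) :=
      Function.Involutive.toPerm (fun p => (p.2.reverse, p.1.reverse)) fun p => by simp
    exact swapReverse.existsUnique_congr fun p => hsplit p.1 p.2

def IsUlamSplit (w : List Bool) (p : List Bool × List Bool) : Prop :=
  IsUlam p.1 ∧ IsUlam p.2 ∧ p.1 ≠ p.2 ∧ p.1 ++ p.2 = w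

lemma not_isUlam_nil : ¬IsUlam [] := not_ulamN_nil 0

lemma IsUlam.ne_nil {w : List Bool} (h : IsUlam w) : w ≠ [] := by
  rintro rfl; exact not_isUlam_nil h

lemma isUlam_singleton (c : Bool) : IsUlam [c] := by
  cases c <;> simp [IsUlam, UlamN]

lemma isUlam_reverse_iff {w : List Bool} : IsUlam w.reverse ↔ IsUlam w := by
  unfold IsUlam
  rw [length_reverse]
  exact ulamN_reverse_iff

lemma isUlam_iff_existsUnique {w : List Bool} (hw : 2 ≤ w.length) :
    IsUlam w ↔ ∃! p, IsUlamSplit w p := by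
  obtain ⟨n, hn⟩ : ∃ n, w.length = n + 1 := ⟨w.length - 1, by omega⟩
  have hsingle : ∀ c, w ≠ [c] := by rintro c rfl; simp at hw
  unfold IsUlam
  rw [hn]
  simp only [UlamN, or_iff_right (hsingle _)]
  refine existsUnique_congr fun p => ⟨?_, ?_⟩
  · rintro ⟨h1, h2, h3, h4, h5, h6⟩
    have l1 := length_lt_of_append_eq_left h2 h6
    have l2 := length_lt_of_append_eq_right h1 h6
    exact ⟨(ulamN_congr_fuel (by omega) le_rfl).1 h3, (ulamN_congr_fuel (by omega) le_rfl).1 h4,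
      h5, h6⟩
  · rintro ⟨h3, h4, h5, h6⟩
    have l1 := length_lt_of_append_eq_left h4.ne_nil h6
    have l2 := length_lt_of_append_eq_right h3.ne_nil h6
    exact ⟨h3.ne_nil, h4.ne_nil, (ulamN_congr_fuel le_rfl (by omega)).1 h3,
      (ulamN_congr_fuel le_rfl (by omega)).1 h4, h5, h6⟩

lemma IsUlamSplit.reverse {w : List Bool} {p : List Bool × List Bool} (h : IsUlamSplit w p) :
    IsUlamSplit w.reverse (p.2.reverse, p.1.reverse) := by
  obtain ⟨h1, h2, h3, h4⟩ := h
  exact ⟨isUlam_reverse_iff.2 h2, isUlam_reverse_iff.2 h1, by simpa [eq_comm] using h3,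
    by rw [← h4, reverse_append]⟩

lemma isUlam_replicate_iff {c : Bool} {k : ℕ} : IsUlam (replicate k c) ↔ k = 1 := by
  induction k using Nat.strong_induction_on with
  | _ k ih =>
  match k with
  | 0 => exact iff_of_false not_isUlam_nil (by decide)
  | 1 => exact iff_of_true (isUlam_singleton c) rfl
  | k + 2 =>
    refine iff_of_false ?_ (by omega)
    rw [isUlam_iff_existsUnique (by simp)]
    rintro ⟨⟨u, v⟩, ⟨hu, hv, hne, h⟩, -⟩
    dsimp only at hu hv hne h
    have lu := length_lt_of_append_eq_left hv.ne_nil h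
    have lv := length_lt_of_append_eq_right hu.ne_nil h
    obtain ⟨-, hu', hv'⟩ := append_eq_replicate_iff.mp h
    rw [length_replicate] at lu lv
    rw [hu'] at hu
    rw [hv'] at hv
    rw [hu', hv', (ih _ lu).1 hu, (ih _ lv).1 hv] at hne
    exact hne rfl

lemma IsUlamSplit.of_replicate_append {c : Bool} {a : ℕ} {s : List Bool}
    {p : List Bool × List Bool} (h : IsUlamSplit (replicate a c ++ s) p) :
    (1 ≤ a ∧ p = ([c], replicate (a - 1) c ++ s)) ∨
      ∃ t, t ≠ [] ∧ p.1 = replicate a c ++ t ∧ t ++ p.2 = s := by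
  obtain ⟨u, v⟩ := p
  obtain ⟨hu, hv, -, h⟩ := h
  dsimp only at hu hv h ⊢
  rcases append_eq_append_iff.mp h with ⟨r, hr, rfl⟩ | ⟨t, rfl, rfl⟩
  · obtain ⟨hlen, hu', hr'⟩ := append_eq_replicate_iff.mp hr.symm
    have hu1 : u.length = 1 := isUlam_replicate_iff.1 (hu' ▸ hu)
    refine Or.inl ⟨by omega, ?_⟩
    rw [hu', hr', hu1, show r.length = a - 1 by omega]
    rfl
  · by_cases ht : t = []
    · subst ht
      rw [append_nil, isUlam_replicate_iff] at hu
      subst hu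
      exact Or.inl ⟨le_rfl, by simp⟩
    · exact Or.inr ⟨t, ht, rfl, rfl⟩

lemma IsUlamSplit.of_append_replicate {c : Bool} {b : ℕ} {s : List Bool}
    {p : List Bool × List Bool} (h : IsUlamSplit (s ++ replicate b c) p) :
    (1 ≤ b ∧ p = (s ++ replicate (b - 1) c, [c])) ∨
      ∃ t, t ≠ [] ∧ p.2 = t ++ replicate b c ∧ p.1 ++ t = s := by
  have hr := h.reverse
  rw [reverse_append, reverse_replicate] at hr
  rcases hr.of_replicate_append with ⟨hb, hp⟩ | ⟨t, ht, h2, h1⟩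
  · obtain ⟨h2, h1⟩ := Prod.mk.inj hp
    refine Or.inl ⟨hb, Prod.ext ?_ ?_⟩
    · simpa using congrArg List.reverse h1
    · simpa using congrArg List.reverse h2
  · refine Or.inr ⟨t.reverse, by simpa using ht, ?_, ?_⟩
    · simpa using congrArg List.reverse h2
    · simpa using congrArg List.reverse h1

lemma append_eq_pair {α : Type*} {t v : List α} {x y : α} (ht : t ≠ []) (hv : v ≠ [])
    (h : t ++ v = [x, y]) : t = [x] ∧ v = [y] := by
  rcases t with _ | ⟨_, _ | ⟨_, t⟩⟩ <;> simp_all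

lemma append_eq_triple {α : Type*} {t v : List α} {x y z : α} (ht : t ≠ []) (hv : v ≠ [])
    (h : t ++ v = [x, y, z]) : (t = [x] ∧ v = [y, z]) ∨ (t = [x, y] ∧ v = [z]) := by
  rcases t with _ | ⟨_, _ | ⟨_, _ | ⟨_, t⟩⟩⟩ <;> simp_all

lemma isUlam_replicate_append_true (a : ℕ) : IsUlam (replicate a false ++ [true]) := by
  induction a with
  | zero => exact isUlam_singleton true
  | succ a ih =>
    rw [isUlam_iff_existsUnique (by simp)]
    refine ⟨([false], replicate a false ++ [true]),
      ⟨isUlam_singleton false, ih, by cases a <;> simp [replicate_succ], by simp [replicate_succ]⟩,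
      fun q hq => ?_⟩
    rcases hq.of_replicate_append with ⟨-, rfl⟩ | ⟨t, ht, -, h⟩
    · simp
    · rcases append_eq_singleton_iff.mp h with ⟨h, -⟩ | ⟨-, h⟩
      exacts [absurd h ht, absurd h hq.2.1.ne_nil]

lemma isUlam_true_cons_replicate (b : ℕ) : IsUlam (true :: replicate b false) := by
  simpa using isUlam_reverse_iff.2 (isUlam_replicate_append_true b)

lemma IsUlamSplit.of_replicate_append_true_false {a : ℕ} {p : List Bool × List Bool}
    (h : IsUlamSplit (replicate a false ++ [true, false]) p) :
    (1 ≤ a ∧ p = ([false], replicate (a - 1) false ++ [true, false])) ∨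
      p = (replicate a false ++ [true], [false]) := by
  refine h.of_replicate_append.imp_right fun ⟨t, ht, h1, h2⟩ => ?_
  obtain ⟨rfl, h⟩ := append_eq_pair ht h.2.1.ne_nil h2
  exact Prod.ext h1 h

lemma isUlamSplit_replicate_append_true_false (a : ℕ) :
    IsUlamSplit (replicate a false ++ [true, false]) (replicate a false ++ [true], [false]) :=
  ⟨isUlam_replicate_append_true a, isUlam_singleton false, by cases a <;> simp [replicate_succ],
    by simp⟩

lemma isUlam_replicate_append_true_false_iff (a : ℕ) :
    IsUlam (replicate a false ++ [true, false]) ↔ Even a := by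
  induction a with
  | zero =>
    refine iff_of_true ((isUlam_iff_existsUnique (by simp)).2
      ⟨_, isUlamSplit_replicate_append_true_false 0, fun q hq => ?_⟩) Even.zero
    simpa using hq.of_replicate_append_true_false
  | succ a ih =>
    rw [isUlam_iff_existsUnique (by simp), Nat.even_add_one, ← ih.not]
    constructor
    · rintro ⟨q, -, hq⟩ hU
      have h1 := hq _ (isUlamSplit_replicate_append_true_false (a + 1))
      have h2 := hq ([false], replicate a false ++ [true, false])
        ⟨isUlam_singleton false, hU, by cases a <;> simp [replicate_succ], by simp [replicate_succ]⟩
      simpa using congrArg (·.1.length) (h2.trans h1.symm)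
    · refine fun hU => ⟨_, isUlamSplit_replicate_append_true_false (a + 1), fun q hq => ?_⟩
      rcases hq.of_replicate_append_true_false with ⟨-, rfl⟩ | rfl
      · exact absurd hq.2.1 (by simpa using hU)
      · rfl

lemma isUlam_false_true_replicate_iff (b : ℕ) :
    IsUlam (false :: true :: replicate b false) ↔ Even b := by
  rw [← isUlam_reverse_iff, ← isUlam_replicate_append_true_false_iff]
  simp

def padded101 (a b : ℕ) : List Bool :=
  replicate a false ++ [true, false, true] ++ replicate b false

lemma IsUlamSplit.of_padded101 {a b : ℕ} {p : List Bool × List Bool}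
    (h : IsUlamSplit (padded101 a b) p) :
    (1 ≤ a ∧ p = ([false], padded101 (a - 1) b)) ∨
      p = (replicate a false ++ [true], false :: true :: replicate b false) ∨
      p = (replicate a false ++ [true, false], true :: replicate b false) ∨
      (1 ≤ b ∧ p = (padded101 a (b - 1), [false])) := by
  have hpre : IsUlamSplit (replicate a false ++ ([true, false, true] ++ replicate b false)) p := by
    simpa [padded101] using h
  rcases hpre.of_replicate_append with ⟨ha, rfl⟩ | ⟨t, ht, hp1, ht2⟩
  · exact Or.inl ⟨ha, by simp [padded101]⟩
  rcases h.of_append_replicate with ⟨hb, rfl⟩ | ⟨t', ht', hp2, ht1⟩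
  · exact Or.inr (Or.inr (Or.inr ⟨hb, rfl⟩))
  rw [hp1, append_assoc] at ht1
  rcases append_eq_triple ht ht' (append_cancel_left ht1) with ⟨rfl, rfl⟩ | ⟨rfl, rfl⟩
  · exact Or.inr (Or.inl (Prod.ext hp1 hp2))
  · exact Or.inr (Or.inr (Or.inl (Prod.ext hp1 hp2)))

lemma isUlamSplit_padded101_iff {a b : ℕ} {p : List Bool × List Bool} :
    IsUlamSplit (padded101 a b) p ↔
      (1 ≤ a ∧ IsUlam (padded101 (a - 1) b) ∧ p = ([false], padded101 (a - 1) b)) ∨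
      (Even b ∧ ¬(a = 1 ∧ b = 0) ∧
        p = (replicate a false ++ [true], false :: true :: replicate b false)) ∨
      (Even a ∧ ¬(a = 0 ∧ b = 1) ∧
        p = (replicate a false ++ [true, false], true :: replicate b false)) ∨
      (1 ≤ b ∧ IsUlam (padded101 a (b - 1)) ∧ p = (padded101 a (b - 1), [false])) := by
  constructor
  · intro h
    rcases h.of_padded101 with ⟨ha, rfl⟩ | rfl | rfl | ⟨hb, rfl⟩
    · exact Or.inl ⟨ha, h.2.1, rfl⟩
    · exact Or.inr (Or.inl ⟨(isUlam_false_true_replicate_iff b).1 h.2.1,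
        fun ⟨ha, hb⟩ => h.2.2.1 (by simp [ha, hb]), rfl⟩)
    · exact Or.inr (Or.inr (Or.inl ⟨(isUlam_replicate_append_true_false_iff a).1 h.1,
        fun ⟨ha, hb⟩ => h.2.2.1 (by simp [ha, hb]), rfl⟩))
    · exact Or.inr (Or.inr (Or.inr ⟨hb, h.1, rfl⟩))
  · rintro (⟨ha, hU, rfl⟩ | ⟨hb, hne, rfl⟩ | ⟨ha, hne, rfl⟩ | ⟨hb, hU, rfl⟩)
    · obtain ⟨a, rfl⟩ := Nat.exists_eq_add_of_le' ha
      refine ⟨isUlam_singleton false, hU, fun h => ?_, by simp [padded101, replicate_succ]⟩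
      have := congrArg length h
      simp [padded101] at this
      omega
    · refine ⟨isUlam_replicate_append_true a, (isUlam_false_true_replicate_iff b).2 hb, ?_,
        by simp [padded101]⟩
      rcases a with _ | _ | a
      · simp
      · intro h
        exact hne ⟨rfl, by simpa using congrArg length h⟩
      · simp [replicate_succ]
    · refine ⟨(isUlam_replicate_append_true_false_iff a).2 ha, isUlam_true_cons_replicate b, ?_,
        by simp [padded101]⟩
      rcases a with _ | a
      · intro h
        have := congrArg length h
        exact hne ⟨rfl, by simp at this; omega⟩
      · simp [replicate_succ]
    · obtain ⟨b, rfl⟩ := Nat.exists_eq_add_of_le' hb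
      refine ⟨hU, isUlam_singleton false, fun h => ?_, by simp [padded101, replicate_succ']⟩
      have := congrArg length h
      simp [padded101] at this
      omega

theorem isUlam_padded101_iff (a b : ℕ) : IsUlam (padded101 a b) ↔ 2 ≤ a + b ∧ Odd (a + b) := by
  induction hn : a + b using Nat.strong_induction_on generalizing a b with
  | _ n ih =>
  have hleft : 1 ≤ a ∧ IsUlam (padded101 (a - 1) b) ↔ 1 ≤ a ∧ 3 ≤ n ∧ n % 2 = 0 :=
    and_congr_right fun ha => (ih _ (by omega) _ _ rfl).trans (by rw [Nat.odd_iff]; omega)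
  have hright : 1 ≤ b ∧ IsUlam (padded101 a (b - 1)) ↔ 1 ≤ b ∧ 3 ≤ n ∧ n % 2 = 0 :=
    and_congr_right fun hb => (ih _ (by omega) _ _ rfl).trans (by rw [Nat.odd_iff]; omega)
  rw [isUlam_iff_existsUnique (by simp [padded101]; omega)]
  simp only [isUlamSplit_padded101_iff, ← and_assoc, hleft, hright, Nat.even_iff, Nat.odd_iff]
  by_cases hodd : 2 ≤ n ∧ n % 2 = 1
  · refine iff_of_true ?_ hodd
    rcases Nat.mod_two_eq_zero_or_one a with ha | ha
    · refine ⟨_, Or.inr (Or.inr (Or.inl ⟨by omega, rfl⟩)), ?_⟩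
      rintro q (⟨_, rfl⟩ | ⟨_, rfl⟩ | ⟨_, rfl⟩ | ⟨_, rfl⟩) <;> first | rfl | omega
    · refine ⟨_, Or.inr (Or.inl ⟨by omega, rfl⟩), ?_⟩
      rintro q (⟨_, rfl⟩ | ⟨_, rfl⟩ | ⟨_, rfl⟩ | ⟨_, rfl⟩) <;> first | rfl | omega
  refine iff_of_false ?_ hodd
  rintro ⟨p, hp, huniq⟩
  by_cases hbothEven : a % 2 = 0 ∧ b % 2 = 0
  · have hB := huniq _ (Or.inr (Or.inl ⟨by omega, rfl⟩))
    have hC := huniq _ (Or.inr (Or.inr (Or.inl ⟨by omega, rfl⟩)))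
    simpa using congrArg (·.1.length) (hB.trans hC.symm)
  by_cases hbothOdd : 4 ≤ n ∧ a % 2 = 1 ∧ b % 2 = 1
  · have hL := huniq _ (Or.inl ⟨by omega, rfl⟩)
    have hR := huniq _ (Or.inr (Or.inr (Or.inr ⟨by omega, rfl⟩)))
    have := congrArg (·.1.length) (hL.trans hR.symm)
    simp [padded101] at this
    omega
  -- what is left is `a + b = 1` or `a = b = 1`, where no candidate is valid
  rcases hp with ⟨_, rfl⟩ | ⟨_, rfl⟩ | ⟨_, rfl⟩ | ⟨_, rfl⟩ <;> omega

theorem ulam_101 (a b : ℕ) (hab : 2 ≤ a + b) :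
    IsUlam (List.replicate a false ++ [true, false, true] ++ List.replicate b false) ↔
      Odd (a + b) :=
  (isUlam_padded101_iff a b).trans (and_iff_right hab)
end

section
/- For any n ≥ 3, the word 1^3 0^{n-3} is Ulam if and only if n ≡ 0 (mod 4) or n ≡ 1 (mod 4). -/
lemma ulamN_nil (m : ℕ) : ¬ UlamN m [] := by
  cases m with
  | zero => simp [UlamN]
  | succ n =>
    simp only [UlamN]
    rintro (h | h | ⟨p, ⟨h1, h2, h3, h4, h5, h6⟩, _⟩)
    · simp at h
    · simp at h
    · exact h1 (List.append_eq_nil_iff.mp h6).1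

lemma ulamN_mono : ∀ m m' : ℕ, m ≤ m' → ∀ w : List Bool, w.length ≤ m →
    (UlamN m w ↔ UlamN m' w) := by
  intro m
  induction m with
  | zero =>
    intro m' _ w hw
    have : w = [] := List.length_eq_zero_iff.mp (Nat.le_zero.mp hw)
    subst this
    simp [UlamN, ulamN_nil]
  | succ n ih =>
    intro m' hm w hw
    obtain ⟨n', rfl⟩ : ∃ n', m' = n' + 1 := ⟨m' - 1, by omega⟩
    have hn : n ≤ n' := by omega
    simp only [UlamN]
    apply or_congr_right
    apply or_congr_right
    apply existsUnique_congr
    intro p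
    constructor
    · rintro ⟨h1, h2, h3, h4, h5, h6⟩
      have hl : p.1.length + p.2.length = w.length := by
        rw [← List.length_append, h6]
      have l1 : p.1.length ≤ n := by
        have := List.length_pos_iff.mpr h2; omega
      have l2 : p.2.length ≤ n := by
        have := List.length_pos_iff.mpr h1; omega
      exact ⟨h1, h2, (ih n' hn p.1 l1).mp h3, (ih n' hn p.2 l2).mp h4, h5, h6⟩
    · rintro ⟨h1, h2, h3, h4, h5, h6⟩
      have hl : p.1.length + p.2.length = w.length := by
        rw [← List.length_append, h6]
      have l1 : p.1.length ≤ n := by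
        have := List.length_pos_iff.mpr h2; omega
      have l2 : p.2.length ≤ n := by
        have := List.length_pos_iff.mpr h1; omega
      exact ⟨h1, h2, (ih n' hn p.1 l1).mpr h3, (ih n' hn p.2 l2).mpr h4, h5, h6⟩

lemma ulamN_iff_isUlam {m : ℕ} {w : List Bool} (h : w.length ≤ m) :
    UlamN m w ↔ IsUlam w := (ulamN_mono w.length m h w le_rfl).symm

lemma isUlam_iff_exu {w : List Bool} (hw : 2 ≤ w.length) :
    IsUlam w ↔ ∃! p : List Bool × List Bool,
      p.1 ≠ [] ∧ p.2 ≠ [] ∧ IsUlam p.1 ∧ IsUlam p.2 ∧ p.1 ≠ p.2 ∧ p.1 ++ p.2 = w := by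
  obtain ⟨n, hn⟩ : ∃ n, w.length = n + 1 := ⟨w.length - 1, by omega⟩
  rw [IsUlam, hn]
  simp only [UlamN]
  have hne0 : w ≠ [false] := by intro h; rw [h] at hw; simp at hw
  have hne1 : w ≠ [true] := by intro h; rw [h] at hw; simp at hw
  simp only [hne0, hne1, false_or]
  apply existsUnique_congr
  intro p
  constructor
  · rintro ⟨h1, h2, h3, h4, h5, h6⟩
    have hl : p.1.length + p.2.length = w.length := by
      rw [← List.length_append, h6]
    have l1 : p.1.length ≤ n := by have := List.length_pos_iff.mpr h2; omega
    have l2 : p.2.length ≤ n := by have := List.length_pos_iff.mpr h1; omega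
    exact ⟨h1, h2, (ulamN_iff_isUlam l1).mp h3, (ulamN_iff_isUlam l2).mp h4, h5, h6⟩
  · rintro ⟨h1, h2, h3, h4, h5, h6⟩
    have hl : p.1.length + p.2.length = w.length := by
      rw [← List.length_append, h6]
    have l1 : p.1.length ≤ n := by have := List.length_pos_iff.mpr h2; omega
    have l2 : p.2.length ≤ n := by have := List.length_pos_iff.mpr h1; omega
    exact ⟨h1, h2, (ulamN_iff_isUlam l1).mpr h3, (ulamN_iff_isUlam l2).mpr h4, h5, h6⟩

lemma split_cons {q1 q2 : List Bool} {a : Bool} {t : List Bool} (h1 : q1 ≠ [])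
    (h : q1 ++ q2 = a :: t) : ∃ s, q1 = a :: s ∧ s ++ q2 = t := by
  cases q1 with
  | nil => exact absurd rfl h1
  | cons b s =>
    simp only [List.cons_append, List.cons.injEq] at h
    exact ⟨s, by rw [h.1], h.2⟩

lemma parts_replicate {s t : List Bool} {k : ℕ} (h : s ++ t = List.replicate k false) :
    s = List.replicate s.length false ∧ t = List.replicate t.length false ∧
      s.length + t.length = k := by
  have hs : ∀ b ∈ s, b = false := by
    intro b hb
    have : b ∈ List.replicate k false := h ▸ List.mem_append_left t hb
    exact List.eq_of_mem_replicate this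
  have ht : ∀ b ∈ t, b = false := by
    intro b hb
    have : b ∈ List.replicate k false := h ▸ List.mem_append_right s hb
    exact List.eq_of_mem_replicate this
  refine ⟨List.eq_replicate_of_mem hs, List.eq_replicate_of_mem ht, ?_⟩
  have := congrArg List.length h
  simpa using this

lemma isUlam_false : IsUlam [false] := by simp [IsUlam, UlamN]
lemma isUlam_true : IsUlam [true] := by simp [IsUlam, UlamN]

lemma isUlam_replicate_false {k : ℕ} : IsUlam (List.replicate k false) ↔ k = 1 := by
  induction k using Nat.strong_induction_on with
  | _ k ih =>
    constructor
    · intro h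
      by_contra hk
      rcases Nat.lt_or_ge k 2 with hk2 | hk2
      · interval_cases k
        · exact ulamN_nil 0 h
        · exact hk rfl
      · have hw2 : 2 ≤ (List.replicate k false).length := by simpa using hk2
        obtain ⟨p, ⟨h1, h2, h3, h4, h5, h6⟩, _⟩ := (isUlam_iff_exu hw2).mp h
        obtain ⟨e1, e2, e3⟩ := parts_replicate h6
        have l1 : p.1.length = 1 := by
          by_contra hl
          rw [e1] at h3
          exact hl ((ih p.1.length (by have := List.length_pos_iff.mpr h2; omega)).mp h3)
        have l2 : p.2.length = 1 := by
          by_contra hl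
          rw [e2] at h4
          exact hl ((ih p.2.length (by have := List.length_pos_iff.mpr h1; omega)).mp h4)
        apply h5
        rw [e1, e2, l1, l2]
    · rintro rfl
      simpa using isUlam_false

lemma isUlam_one_zeros : ∀ k : ℕ, IsUlam (true :: List.replicate k false) := by
  intro k
  induction k with
  | zero => simpa using isUlam_true
  | succ m ih =>
    have hw2 : 2 ≤ (true :: List.replicate (m+1) false).length := by simp
    rw [isUlam_iff_exu hw2]
    refine ⟨(true :: List.replicate m false, [false]), ⟨by simp, by simp, ih, isUlam_false,
      by simp, by simp [List.replicate_add]⟩, ?_⟩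
    rintro ⟨q1, q2⟩ ⟨h1, h2, h3, h4, h5, h6⟩
    obtain ⟨s, rfl, hs⟩ := split_cons h1 h6
    dsimp only at *
    obtain ⟨e1, e2, e3⟩ := parts_replicate hs
    have l2 : q2.length = 1 := isUlam_replicate_false.mp (e2 ▸ h4)
    have : s = List.replicate m false := by
      rw [e1]; congr 1; omega
    rw [e2, l2, this]; rfl

lemma pairs2 {k : ℕ} (q : List Bool × List Bool) (h1 : q.1 ≠ []) (h2 : q.2 ≠ [])
    (h3 : IsUlam q.1) (h4 : IsUlam q.2) (h5 : q.1 ≠ q.2)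
    (h6 : q.1 ++ q.2 = true :: true :: List.replicate k false) :
    (q = ([true], true :: List.replicate k false) ∧ 1 ≤ k) ∨
    (1 ≤ k ∧ q = (true :: true :: List.replicate (k-1) false, [false]) ∧
      IsUlam (true :: true :: List.replicate (k-1) false)) := by
  obtain ⟨q1, q2⟩ := q
  dsimp only at *
  obtain ⟨s, rfl, hs⟩ := split_cons h1 h6
  cases s with
  | nil =>
    left
    simp only [List.nil_append] at hs
    have hk : 1 ≤ k := by
      by_contra hk
      have : k = 0 := by omega
      subst this
      simp at hs
      exact h5 (by rw [hs])
    exact ⟨by rw [hs], hk⟩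
  | cons b s' =>
    right
    simp only [List.cons_append, List.cons.injEq] at hs
    obtain ⟨rfl, hs'⟩ := hs
    obtain ⟨e1, e2, e3⟩ := parts_replicate hs'
    have l2 : q2.length = 1 := isUlam_replicate_false.mp (e2 ▸ h4)
    have hk : 1 ≤ k := by omega
    have hs'' : s' = List.replicate (k-1) false := by rw [e1]; congr 1; omega
    refine ⟨hk, ?_, ?_⟩
    · rw [e2, l2, hs'']; rfl
    · rw [← hs'']; exact h3

lemma two_zero : ¬ IsUlam [true, true] := by
  intro h
  obtain ⟨p, ⟨h1, h2, h3, h4, h5, h6⟩, _⟩ := (isUlam_iff_exu (by simp)).mp h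
  have := pairs2 (k := 0) p h1 h2 h3 h4 h5 (by simpa using h6)
  rcases this with ⟨_, hk⟩ | ⟨hk, _⟩ <;> omega

lemma two_succ (m : ℕ) :
    IsUlam (true :: true :: List.replicate (m+1) false) ↔
      ¬ IsUlam (true :: true :: List.replicate m false) := by
  constructor
  · intro h hm
    obtain ⟨p, hp, hu⟩ := (isUlam_iff_exu (by simp)).mp h
    have e1 := hu ([true], true :: List.replicate (m+1) false)
      ⟨by simp, by simp, isUlam_true, isUlam_one_zeros _, by simp, by simp⟩
    have e2 := hu (true :: true :: List.replicate m false, [false])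
      ⟨by simp, by simp, hm, isUlam_false, by simp, by simp only [List.cons_append, ← List.replicate_succ']⟩
    rw [← e2] at e1
    simp at e1
  · intro hm
    rw [isUlam_iff_exu (by simp)]
    refine ⟨([true], true :: List.replicate (m+1) false),
      ⟨by simp, by simp, isUlam_true, isUlam_one_zeros _, by simp, by simp⟩, ?_⟩
    intro q hq
    rcases pairs2 q hq.1 hq.2.1 hq.2.2.1 hq.2.2.2.1 hq.2.2.2.2.1 hq.2.2.2.2.2 with
      ⟨e, _⟩ | ⟨_, _, hUl⟩
    · exact e
    · exact absurd (by simpa using hUl) hm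

lemma isUlam_two (k : ℕ) :
    IsUlam (true :: true :: List.replicate k false) ↔ k % 2 = 1 := by
  induction k with
  | zero => simpa using two_zero
  | succ m ih =>
    rw [two_succ, ih]
    omega

lemma pairs3 {k : ℕ} (q : List Bool × List Bool) (h1 : q.1 ≠ []) (h2 : q.2 ≠ [])
    (h3 : IsUlam q.1) (h4 : IsUlam q.2) (h5 : q.1 ≠ q.2)
    (h6 : q.1 ++ q.2 = true :: true :: true :: List.replicate k false) :
    (q = ([true], true :: true :: List.replicate k false) ∧ k % 2 = 1) ∨
    (1 ≤ k ∧ q = (true :: true :: true :: List.replicate (k-1) false, [false]) ∧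
      IsUlam (true :: true :: true :: List.replicate (k-1) false)) := by
  obtain ⟨q1, q2⟩ := q
  dsimp only at *
  obtain ⟨s, rfl, hs⟩ := split_cons h1 h6
  cases s with
  | nil =>
    left
    simp only [List.nil_append] at hs
    exact ⟨by rw [hs], (isUlam_two k).mp (hs ▸ h4)⟩
  | cons b s' =>
    simp only [List.cons_append, List.cons.injEq] at hs
    obtain ⟨rfl, hs'⟩ := hs
    cases s' with
    | nil =>
      simp only [List.nil_append] at hs'
      exact absurd h3 two_zero
    | cons c s'' =>
      right
      simp only [List.cons_append, List.cons.injEq] at hs'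
      obtain ⟨rfl, hs''⟩ := hs'
      obtain ⟨e1, e2, e3⟩ := parts_replicate hs''
      have l2 : q2.length = 1 := isUlam_replicate_false.mp (e2 ▸ h4)
      have hk : 1 ≤ k := by omega
      have hr : s'' = List.replicate (k-1) false := by rw [e1]; congr 1; omega
      refine ⟨hk, ?_, ?_⟩
      · rw [e2, l2, hr]; rfl
      · rw [← hr]; exact h3

lemma isUlam_three (k : ℕ) :
    IsUlam (true :: true :: true :: List.replicate k false) ↔ k % 4 = 1 ∨ k % 4 = 2 := by
  induction k using Nat.strong_induction_on with
  | _ k ih =>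
    rcases Nat.eq_zero_or_pos k with rfl | hk
    · simp only [List.replicate_zero]
      constructor
      · intro h
        obtain ⟨p, ⟨h1, h2, h3, h4, h5, h6⟩, _⟩ := (isUlam_iff_exu (by simp)).mp h
        rcases pairs3 (k := 0) p h1 h2 h3 h4 h5 (by simpa using h6) with ⟨_, hp⟩ | ⟨hp, _⟩ <;>
          omega
      · omega
    · obtain ⟨m, rfl⟩ : ∃ m, k = m + 1 := ⟨k - 1, by omega⟩
      have ihm := ih m (by omega)
      have hP1u : IsUlam (true :: true :: List.replicate (m+1) false) ↔ (m+1) % 2 = 1 :=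
        isUlam_two (m+1)
      have happ : (true :: true :: true :: List.replicate m false) ++ [false] =
          true :: true :: true :: List.replicate (m+1) false := by
        simp only [List.cons_append, ← List.replicate_succ']
      have hm4 : m % 4 = 0 ∨ m % 4 = 1 ∨ m % 4 = 2 ∨ m % 4 = 3 := by omega
      rcases hm4 with h0 | h1 | h2 | h3
      · refine iff_of_true ?_ (by omega)
        rw [isUlam_iff_exu (by simp)]
        refine ⟨([true], true :: true :: List.replicate (m+1) false),
          ⟨by simp, by simp, isUlam_true, hP1u.mpr (by omega), by simp, by simp⟩, ?_⟩
        intro q hq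
        rcases pairs3 q hq.1 hq.2.1 hq.2.2.1 hq.2.2.2.1 hq.2.2.2.2.1 hq.2.2.2.2.2 with
          ⟨e, _⟩ | ⟨_, _, hU⟩
        · exact e
        · have := ihm.mp (by simpa using hU); omega
      · refine iff_of_true ?_ (by omega)
        rw [isUlam_iff_exu (by simp)]
        refine ⟨(true :: true :: true :: List.replicate m false, [false]),
          ⟨by simp, by simp, ihm.mpr (by omega), isUlam_false, by simp, happ⟩, ?_⟩
        intro q hq
        rcases pairs3 q hq.1 hq.2.1 hq.2.2.1 hq.2.2.2.1 hq.2.2.2.2.1 hq.2.2.2.2.2 with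
          ⟨_, hpar⟩ | ⟨_, e, _⟩
        · omega
        · simpa using e
      · refine iff_of_false ?_ (by omega)
        intro h
        obtain ⟨p, hp, hu⟩ := (isUlam_iff_exu (by simp)).mp h
        have e1 := hu ([true], true :: true :: List.replicate (m+1) false)
          ⟨by simp, by simp, isUlam_true, hP1u.mpr (by omega), by simp, by simp⟩
        have e2 := hu (true :: true :: true :: List.replicate m false, [false])
          ⟨by simp, by simp, ihm.mpr (by omega), isUlam_false, by simp, happ⟩
        rw [← e2] at e1
        simp at e1
      · refine iff_of_false ?_ (by omega)
        intro h
        obtain ⟨p, ⟨h1, h2, h3, h4, h5, h6⟩, _⟩ := (isUlam_iff_exu (by simp)).mp h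
        rcases pairs3 p h1 h2 h3 h4 h5 h6 with ⟨_, hpar⟩ | ⟨_, _, hU⟩
        · omega
        · have := ihm.mp (by simpa using hU); omega

theorem ulam_three_ones (n : ℕ) (hn : 3 ≤ n) :
    IsUlam (List.replicate 3 true ++ List.replicate (n - 3) false) ↔
      n % 4 = 0 ∨ n % 4 = 1 := by
  have : List.replicate 3 true ++ List.replicate (n-3) false =
      true :: true :: true :: List.replicate (n-3) false := by rfl
  rw [this, isUlam_three]
  omega
end
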